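/- For every instance of the charging game with T=2 time steps and every price profile p∈ℝ² with p_1 > p_2, the all-zero strategy profile is a Nash equilibrium, and it is the unique Nash equilibrium. -/

import Mathlib

/-!
Formalization of the charging game on capacitated energy networks.

An instance consists of a finite directed host graph `H = (V, E)`, `T` time steps
(with per-time-step edge capacities `κE` and demands `d`), and a finite set `B` of
battery agents, each located at a node `loc b`, with battery edges `(b_t, b_{t+1})`
of capacity `κB b t`.
-/

structure ChargingGame where
  /-- households/vertices of the host graph -/
  V : Type
  fintypeV : Fintype V
  decV : DecidableEq V
  /-- number of time steps (time steps are indexed by `Fin T`) -/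
  T : ℕ
  T_pos : 0 < T
  /-- directed edges (power lines) of the host graph -/
  E : Finset (V × V)
  /-- capacity of (the copy of) edge `e` in time step `t` -/
  κE : Fin T → V × V → ℝ
  κE_nonneg : ∀ t e, 0 ≤ κE t e
  /-- demand/supply of node `v` in time step `t` (positive = supply, negative = demand) -/
  d : Fin T → V → ℝ
  /-- the battery agents -/
  B : Type
  fintypeB : Fintype B
  decB : DecidableEq B
  /-- the location of agent `b` -/
  loc : B → V
  /-- capacity of the battery edge `(b_t, b_{t+1})` (only `t` with `t+1 < T` is relevant) -/
  κB : B → Fin T → ℝ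
  κB_nonneg : ∀ b t, 0 ≤ κB b t

attribute [instance] ChargingGame.fintypeV ChargingGame.decV
attribute [instance] ChargingGame.fintypeB ChargingGame.decB

namespace ChargingGame

variable (G : ChargingGame)

/-- Nodes of the time-expanded energy network graph `G`:
grid nodes `(t, v)`, battery nodes `(t, b)`, and `false` = source `x`, `true` = sink `y`. -/
abbrev Node : Type := (Fin G.T × G.V) ⊕ ((Fin G.T × G.B) ⊕ Bool)

/-- the source `x` -/
abbrev source : G.Node := Sum.inr (Sum.inr false)

/-- the sink `y` -/
abbrev sink : G.Node := Sum.inr (Sum.inr true)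

/-- the copy of household node `v` in time step `t` -/
abbrev gridNode (t : Fin G.T) (v : G.V) : G.Node := Sum.inl (t, v)

/-- the battery node `b_t` of agent `b` in time step `t` -/
abbrev batNode (t : Fin G.T) (b : G.B) : G.Node := Sum.inr (Sum.inl (t, b))

/-- The capacities of the graph `G_s` induced by a strategy profile
`s : B → Fin T → ℝ` (`s b t > 0` means agent `b` charges `s b t` in step `t`,
`s b t < 0` means she discharges `-(s b t)`).  Non-edges have capacity `0`. -/
def cap (s : G.B → Fin G.T → ℝ) : G.Node → G.Node → ℝ
  | Sum.inl (t, v), Sum.inl (t', v') =>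
      if t = t' ∧ (v, v') ∈ G.E then G.κE t (v, v') else 0
  | Sum.inl (t, v), Sum.inr (Sum.inl (t', b)) =>
      if t = t' ∧ G.loc b = v then max 0 (s b t') else 0
  | Sum.inr (Sum.inl (t, b)), Sum.inl (t', v) =>
      if t = t' ∧ G.loc b = v then max 0 (-(s b t)) else 0
  | Sum.inr (Sum.inl (t, b)), Sum.inr (Sum.inl (t', b')) =>
      if b = b' ∧ (t' : ℕ) = (t : ℕ) + 1 then G.κB b t else 0
  | Sum.inr (Sum.inr false), Sum.inl (t, v) => max 0 (G.d t v)
  | Sum.inl (t, v), Sum.inr (Sum.inr true) => max 0 (-(G.d t v))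
  | _, _ => 0

/-- A feasible flow on the node set of `G` with capacities `c`. -/
structure IsFlow (c : G.Node → G.Node → ℝ) (f : G.Node → G.Node → ℝ) : Prop where
  nonneg : ∀ u v, 0 ≤ f u v
  le_cap : ∀ u v, f u v ≤ c u v
  conserve : ∀ n, n ≠ G.source → n ≠ G.sink → (∑ u, f u n) = (∑ w, f n w)

/-- The value `|f|` of a flow: total flow leaving the source. -/
def value (f : G.Node → G.Node → ℝ) : ℝ := ∑ v, f G.source v

/-- `f` is a maximum flow for capacities `c`. -/
def IsMaxFlow (c : G.Node → G.Node → ℝ) (f : G.Node → G.Node → ℝ) : Prop :=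
  G.IsFlow c f ∧ ∀ g, G.IsFlow c g → G.value g ≤ G.value f

/-- Agent `b`'s strategy is admissible for the profile `s`:
every maximum flow in `G_s` saturates both transaction edges of `b` in every time step. -/
def Admissible (s : G.B → Fin G.T → ℝ) (b : G.B) : Prop :=
  ∀ f, G.IsMaxFlow (G.cap s) f → ∀ t : Fin G.T,
    f (G.gridNode t (G.loc b)) (G.batNode t b)
        = G.cap s (G.gridNode t (G.loc b)) (G.batNode t b) ∧
    f (G.batNode t b) (G.gridNode t (G.loc b))
        = G.cap s (G.batNode t b) (G.gridNode t (G.loc b))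

/-- A valid strategy of agent `b`: all prefix sums lie between `0` and the battery
capacity (for every `t` with `t + 1 < T`, i.e. `t ∈ [T-1]` in 1-based indexing). -/
def ValidStrategy (b : G.B) (sb : Fin G.T → ℝ) : Prop :=
  ∀ t : Fin G.T, (t : ℕ) + 1 < G.T →
    0 ≤ (∑ z ∈ Finset.Iic t, sb z) ∧ (∑ z ∈ Finset.Iic t, sb z) ≤ G.κB b t

/-- A valid strategy profile. -/
def ValidProfile (s : G.B → Fin G.T → ℝ) : Prop := ∀ b, G.ValidStrategy b (s b)

open scoped Classical in
/-- The utility of agent `b` under price profile `p` and strategy profile `s`: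
`-∑ t, s b t * p t` if `b`'s strategy is admissible, and `-∞` otherwise. -/
noncomputable def utility (p : Fin G.T → ℝ) (s : G.B → Fin G.T → ℝ) (b : G.B) : EReal :=
  if G.Admissible s b then ((-(∑ t, s b t * p t) : ℝ) : EReal) else ⊥

/-- `s` is a (pure) Nash equilibrium for the price profile `p`. -/
def IsNash (p : Fin G.T → ℝ) (s : G.B → Fin G.T → ℝ) : Prop :=
  G.ValidProfile s ∧
  ∀ b (sb' : Fin G.T → ℝ), G.ValidStrategy b sb' →
    ¬ G.utility p s b < G.utility p (Function.update s b sb') b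

/-- `s` is a `k`-strong equilibrium for the price profile `p`: no nonempty coalition of
at most `k` agents has a joint deviation strictly improving the utility of each member. -/
def IsStrongEq (k : ℕ) (p : Fin G.T → ℝ) (s : G.B → Fin G.T → ℝ) : Prop :=
  G.ValidProfile s ∧
  ∀ C : Finset G.B, C.Nonempty → C.card ≤ k →
    ∀ s' : G.B → Fin G.T → ℝ, (∀ b, G.ValidStrategy b (s' b)) →
      (∀ b ∉ C, s' b = s b) →
      ¬ ∀ b ∈ C, G.utility p s b < G.utility p s' b

/-- The welfare `W(s)` of a strategy profile `s`: the value of a maximum flow in `G_s`. -/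
noncomputable def welfare (s : G.B → Fin G.T → ℝ) : ℝ :=
  sSup {r | ∃ f, G.IsFlow (G.cap s) f ∧ G.value f = r}

/-- The maximum welfare over all (valid) strategy profiles. -/
noncomputable def optWelfare : ℝ :=
  sSup {r | ∃ s, G.ValidProfile s ∧ G.welfare s = r}

end ChargingGame

namespace ChargingGameAux

open ChargingGame

lemma max_sub_max (x : ℝ) : max 0 x - max 0 (-x) = x := by
  rcases le_total 0 x with h | h
  · rw [max_eq_right h, max_eq_left (neg_nonpos.mpr h)]; ring
  · rw [max_eq_left h, max_eq_right (neg_nonneg.mpr h)]; ring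

lemma cap_nonneg (G : ChargingGame) (s : G.B → Fin G.T → ℝ) (u v : G.Node) :
    0 ≤ G.cap s u v := by
  rcases u with ⟨t, w⟩ | ⟨t, b⟩ | _ | _ <;> rcases v with ⟨t', w'⟩ | ⟨t', b'⟩ | _ | _ <;>
    simp only [ChargingGame.cap] <;>
    try split
  all_goals
    first
      | exact le_refl 0
      | exact le_max_left _ _
      | exact G.κE_nonneg _ _
      | exact G.κB_nonneg _ _

/-- The capacities of the two transaction edges of agent `b` in step `t`. -/
lemma cap_sat (G : ChargingGame) (s : G.B → Fin G.T → ℝ) (b : G.B) (t : Fin G.T) :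
    G.cap s (G.gridNode t (G.loc b)) (G.batNode t b) = max 0 (s b t) ∧
    G.cap s (G.batNode t b) (G.gridNode t (G.loc b)) = max 0 (-(s b t)) := by
  constructor
  · show (if t = t ∧ G.loc b = G.loc b then max 0 (s b t) else 0) = max 0 (s b t)
    rw [if_pos ⟨rfl, rfl⟩]
  · show (if t = t ∧ G.loc b = G.loc b then max 0 (-(s b t)) else 0) = max 0 (-(s b t))
    rw [if_pos ⟨rfl, rfl⟩]

/-- Existence of a maximum flow for nonnegative capacities. -/
lemma exists_maxFlow (G : ChargingGame) (c : G.Node → G.Node → ℝ)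
    (hc : ∀ u v, 0 ≤ c u v) : ∃ f, G.IsMaxFlow c f := by
  classical
  set K : Set (G.Node → G.Node → ℝ) := {f | G.IsFlow c f} with hK
  have hev : ∀ u v, Continuous (fun f : G.Node → G.Node → ℝ => f u v) :=
    fun u v => (continuous_apply v).comp (continuous_apply u)
  have hzero : (fun _ _ => (0 : ℝ)) ∈ K := by
    refine ⟨fun _ _ => le_refl 0, fun u v => hc u v, fun n _ _ => by simp⟩
  have hclosed : IsClosed K := by
    have h1 : IsClosed {f : G.Node → G.Node → ℝ | ∀ u v, 0 ≤ f u v} := by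
      have he : {f : G.Node → G.Node → ℝ | ∀ u v, 0 ≤ f u v}
          = ⋂ u, ⋂ v, {f | 0 ≤ f u v} := by ext f; simp
      rw [he]
      exact isClosed_iInter fun u => isClosed_iInter fun v =>
        isClosed_le continuous_const (hev u v)
    have h2 : IsClosed {f : G.Node → G.Node → ℝ | ∀ u v, f u v ≤ c u v} := by
      have he : {f : G.Node → G.Node → ℝ | ∀ u v, f u v ≤ c u v}
          = ⋂ u, ⋂ v, {f | f u v ≤ c u v} := by ext f; simp
      rw [he]
      exact isClosed_iInter fun u => isClosed_iInter fun v =>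
        isClosed_le (hev u v) continuous_const
    have h3 : IsClosed {f : G.Node → G.Node → ℝ |
        ∀ n, n ≠ G.source → n ≠ G.sink → (∑ u, f u n) = (∑ w, f n w)} := by
      have he : {f : G.Node → G.Node → ℝ |
          ∀ n, n ≠ G.source → n ≠ G.sink → (∑ u, f u n) = (∑ w, f n w)}
          = ⋂ n, {f | n ≠ G.source → n ≠ G.sink → (∑ u, f u n) = (∑ w, f n w)} := by
        ext f; simp
      rw [he]
      refine isClosed_iInter fun n => ?_
      by_cases h : n ≠ G.source ∧ n ≠ G.sink
      · have he : {f : G.Node → G.Node → ℝ |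
            n ≠ G.source → n ≠ G.sink → (∑ u, f u n) = (∑ w, f n w)}
            = {f | (∑ u, f u n) = (∑ w, f n w)} := by
          ext f; simp [h.1, h.2]
        rw [he]
        exact isClosed_eq (continuous_finset_sum _ fun u _ => hev u n)
          (continuous_finset_sum _ fun w _ => hev n w)
      · have he : {f : G.Node → G.Node → ℝ |
            n ≠ G.source → n ≠ G.sink → (∑ u, f u n) = (∑ w, f n w)} = Set.univ := by
          ext f
          simp only [Set.mem_setOf_eq, Set.mem_univ, iff_true]
          intro h1' h2'; exact absurd ⟨h1', h2'⟩ h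
        rw [he]; exact isClosed_univ
    have he : K = {f : G.Node → G.Node → ℝ | ∀ u v, 0 ≤ f u v}
        ∩ ({f | ∀ u v, f u v ≤ c u v}
          ∩ {f | ∀ n, n ≠ G.source → n ≠ G.sink → (∑ u, f u n) = (∑ w, f n w)}) := by
      ext f
      constructor
      · rintro ⟨a, b, d⟩; exact ⟨a, b, d⟩
      · rintro ⟨a, b, d⟩; exact ⟨a, b, d⟩
    rw [he]
    exact h1.inter (h2.inter h3)
  have hbig : IsCompact (Set.univ.pi fun u : G.Node =>
      Set.univ.pi fun v : G.Node => Set.Icc (0 : ℝ) (c u v)) :=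
    isCompact_univ_pi fun u => isCompact_univ_pi fun v => isCompact_Icc
  have hcpt : IsCompact K := by
    refine hbig.of_isClosed_subset hclosed ?_
    intro f hf
    rw [Set.mem_univ_pi]
    intro u
    rw [Set.mem_univ_pi]
    intro v
    exact ⟨hf.nonneg u v, hf.le_cap u v⟩
  obtain ⟨f, hfK, hmax⟩ := hcpt.exists_isMaxOn ⟨_, hzero⟩
    ((continuous_finset_sum _ fun v _ => hev G.source v).continuousOn)
  exact ⟨f, hfK, fun g hg => hmax hg⟩

/-- A strategy that is identically zero is always admissible. -/
lemma admissible_of_zero (G : ChargingGame) (s : G.B → Fin G.T → ℝ) (b : G.B)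
    (hz : ∀ t, s b t = 0) : G.Admissible s b := by
  intro f hf t
  have h1 : G.cap s (G.gridNode t (G.loc b)) (G.batNode t b) = 0 := by
    rw [(cap_sat G s b t).1, hz]; simp
  have h2 : G.cap s (G.batNode t b) (G.gridNode t (G.loc b)) = 0 := by
    rw [(cap_sat G s b t).2, hz]; simp
  constructor
  · rw [h1]; exact le_antisymm (h1 ▸ hf.1.le_cap _ _) (hf.1.nonneg _ _)
  · rw [h2]; exact le_antisymm (h2 ▸ hf.1.le_cap _ _) (hf.1.nonneg _ _)

lemma zero_valid (G : ChargingGame) (b : G.B) : G.ValidStrategy b (fun _ => 0) := by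
  intro t _
  simp only [Finset.sum_const_zero]
  exact ⟨le_refl 0, G.κB_nonneg b t⟩

/-- Key structural lemma: if `f` is a flow in `G_s` saturating both transaction
edges of agent `b` (for `T = 2`), then `s b 0 ≥ 0` and `s b 1 = - s b 0`. -/
lemma key (G : ChargingGame) (hT : G.T = 2) (s : G.B → Fin G.T → ℝ) (b : G.B)
    (f : G.Node → G.Node → ℝ) (hf : G.IsFlow (G.cap s) f)
    (hsat : ∀ t : Fin G.T,
      f (G.gridNode t (G.loc b)) (G.batNode t b) = max 0 (s b t) ∧
      f (G.batNode t b) (G.gridNode t (G.loc b)) = max 0 (-(s b t))) :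
    0 ≤ s b ⟨0, by simp [hT]⟩ ∧ s b ⟨1, by simp [hT]⟩ = - s b ⟨0, by simp [hT]⟩ := by
  classical
  set t0 : Fin G.T := ⟨0, by omega⟩ with ht0
  set t1 : Fin G.T := ⟨1, by omega⟩ with ht1
  have ht0v : (t0 : ℕ) = 0 := rfl
  have ht1v : (t1 : ℕ) = 1 := rfl
  set n0 : G.Node := G.batNode t0 b with hn0
  set n1 : G.Node := G.batNode t1 b with hn1
  set g0 : G.Node := G.gridNode t0 (G.loc b) with hg0
  set g1 : G.Node := G.gridNode t1 (G.loc b) with hg1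
  have hcap0 : ∀ u v, G.cap s u v = 0 → f u v = 0 :=
    fun u v h => le_antisymm (h ▸ hf.le_cap u v) (hf.nonneg u v)
  -- edges into n0
  have hin0 : ∀ u ∈ Finset.univ, u ≠ g0 → f u n0 = 0 := by
    rintro (⟨t', v'⟩ | ⟨t', b'⟩ | _ | _) - hu <;> apply hcap0
    · show (if t' = t0 ∧ G.loc b = v' then max 0 (s b t0) else 0) = 0
      rw [if_neg]
      rintro ⟨rfl, rfl⟩
      exact hu rfl
    · show (if b' = b ∧ (t0 : ℕ) = (t' : ℕ) + 1 then G.κB b' t' else 0) = 0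
      rw [if_neg]
      rintro ⟨-, h⟩
      omega
    · rfl
    · rfl
  -- edges out of n0
  have hout0 : ∀ w ∈ Finset.univ, w ≠ g0 ∧ w ≠ n1 → f n0 w = 0 := by
    rintro (⟨t', v'⟩ | ⟨t', b'⟩ | _ | _) - ⟨hw1, hw2⟩ <;> apply hcap0
    · show (if t0 = t' ∧ G.loc b = v' then max 0 (-(s b t0)) else 0) = 0
      rw [if_neg]
      rintro ⟨rfl, rfl⟩
      exact hw1 rfl
    · show (if b = b' ∧ (t' : ℕ) = (t0 : ℕ) + 1 then G.κB b t0 else 0) = 0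
      rw [if_neg]
      rintro ⟨rfl, h⟩
      apply hw2
      have : t' = t1 := by apply Fin.ext; omega
      rw [this]
    · rfl
    · rfl
  -- edges into n1
  have hin1 : ∀ u ∈ Finset.univ, u ≠ g1 ∧ u ≠ n0 → f u n1 = 0 := by
    rintro (⟨t', v'⟩ | ⟨t', b'⟩ | _ | _) - ⟨hu1, hu2⟩ <;> apply hcap0
    · show (if t' = t1 ∧ G.loc b = v' then max 0 (s b t1) else 0) = 0
      rw [if_neg]
      rintro ⟨rfl, rfl⟩
      exact hu1 rfl
    · show (if b' = b ∧ (t1 : ℕ) = (t' : ℕ) + 1 then G.κB b' t' else 0) = 0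
      rw [if_neg]
      rintro ⟨rfl, h⟩
      apply hu2
      have : t' = t0 := by apply Fin.ext; omega
      rw [this]
    · rfl
    · rfl
  -- edges out of n1
  have hout1 : ∀ w ∈ Finset.univ, w ≠ g1 → f n1 w = 0 := by
    rintro (⟨t', v'⟩ | ⟨t', b'⟩ | _ | _) - hw <;> apply hcap0
    · show (if t1 = t' ∧ G.loc b = v' then max 0 (-(s b t1)) else 0) = 0
      rw [if_neg]
      rintro ⟨rfl, rfl⟩
      exact hw rfl
    · show (if b = b' ∧ (t' : ℕ) = (t1 : ℕ) + 1 then G.κB b t1 else 0) = 0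
      rw [if_neg]
      rintro ⟨rfl, h⟩
      have := t'.isLt
      omega
    · rfl
    · rfl
  have hne01 : g0 ≠ n1 := by simp [hg0, hn1]
  have hne02 : g1 ≠ n0 := by simp [hg1, hn0]
  have hsum_in0 : (∑ u, f u n0) = f g0 n0 :=
    Finset.sum_eq_single_of_mem g0 (Finset.mem_univ _) hin0
  have hsum_out0 : (∑ w, f n0 w) = f n0 g0 + f n0 n1 :=
    Finset.sum_eq_add_of_mem g0 n1 (Finset.mem_univ _) (Finset.mem_univ _) hne01 hout0
  have hsum_in1 : (∑ u, f u n1) = f g1 n1 + f n0 n1 :=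
    Finset.sum_eq_add_of_mem g1 n0 (Finset.mem_univ _) (Finset.mem_univ _) hne02 hin1
  have hsum_out1 : (∑ w, f n1 w) = f n1 g1 :=
    Finset.sum_eq_single_of_mem g1 (Finset.mem_univ _) hout1
  have c0 := hf.conserve n0 (by simp [hn0]) (by simp [hn0])
  have c1 := hf.conserve n1 (by simp [hn1]) (by simp [hn1])
  rw [hsum_in0, hsum_out0, (hsat t0).1, (hsat t0).2] at c0
  rw [hsum_in1, hsum_out1, (hsat t1).1, (hsat t1).2] at c1
  have hx0 := max_sub_max (s b t0)
  have hx1 := max_sub_max (s b t1)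
  have hfn : f n0 n1 = s b t0 := by linarith
  have hpos := hf.nonneg n0 n1
  constructor
  · rw [← hfn]; exact hpos
  · linarith

lemma fin_two (G : ChargingGame) (hT : G.T = 2) (t : Fin G.T) :
    t = ⟨0, by simp [hT]⟩ ∨ t = ⟨1, by simp [hT]⟩ := by
  have h := t.isLt
  have : (t : ℕ) = 0 ∨ (t : ℕ) = 1 := by omega
  rcases this with h' | h'
  · left; exact Fin.ext h'
  · right; exact Fin.ext h'

lemma sum_fin_two (G : ChargingGame) (hT : G.T = 2) (g : Fin G.T → ℝ) :
    (∑ t, g t) = g ⟨0, by simp [hT]⟩ + g ⟨1, by simp [hT]⟩ := by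
  refine Finset.sum_eq_add_of_mem _ _ (Finset.mem_univ _) (Finset.mem_univ _)
    (by simp [Fin.ext_iff]) ?_
  rintro t - ⟨h1, h2⟩
  rcases fin_two G hT t with h | h
  · exact absurd h h1
  · exact absurd h h2

end ChargingGameAux


/-- For every instance with `T = 2` time steps and every price profile with
`p 1 > p 2` (descending prices), the all-zero strategy profile is a Nash equilibrium,
and it is the unique Nash equilibrium. -/
theorem zero_profile_unique_nash_of_descending (G : ChargingGame) (hT : G.T = 2)
    (p : Fin G.T → ℝ) (hp : p ⟨1, by omega⟩ < p ⟨0, by omega⟩) :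
    G.IsNash p (fun _ _ => 0) ∧
    ∀ s : G.B → Fin G.T → ℝ, G.IsNash p s → s = fun _ _ => 0 := by
  classical
  open ChargingGameAux in
  constructor
  · refine ⟨fun b => zero_valid G b, ?_⟩
    intro b sb' hval hlt
    have hadm0 : G.Admissible (fun _ _ => 0) b :=
      admissible_of_zero G _ b (fun _ => rfl)
    have hu0 : G.utility p (fun _ _ => 0) b = ((0 : ℝ) : EReal) := by
      simp only [ChargingGame.utility]
      rw [if_pos hadm0]
      norm_num
    by_cases hadm : G.Admissible (Function.update (fun _ _ => 0) b sb') b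
    · obtain ⟨f, hfmax⟩ := exists_maxFlow G
        (G.cap (Function.update (fun _ _ => 0) b sb')) (cap_nonneg G _)
      have hsat' : ∀ t : Fin G.T,
          f (G.gridNode t (G.loc b)) (G.batNode t b)
            = max 0 ((Function.update (fun _ _ => 0) b sb') b t) ∧
          f (G.batNode t b) (G.gridNode t (G.loc b))
            = max 0 (-((Function.update (fun _ _ => 0) b sb') b t)) := by
        intro t
        obtain ⟨h1, h2⟩ := hadm f hfmax t
        constructor
        · rw [h1]; simp [ChargingGame.cap]
        · rw [h2]; simp [ChargingGame.cap]
      obtain ⟨h0, h1⟩ := key G hT _ b f hfmax.1 hsat'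
      simp only [Function.update_self] at h0 h1
      have hu1 : G.utility p (Function.update (fun _ _ => 0) b sb') b
          = ((-(∑ t, sb' t * p t) : ℝ) : EReal) := by
        simp only [ChargingGame.utility]
        rw [if_pos hadm, Function.update_self]
      rw [hu0, hu1, EReal.coe_lt_coe_iff, sum_fin_two G hT, h1] at hlt
      nlinarith [mul_nonneg h0 (le_of_lt (sub_pos.mpr hp))]
    · have hu1 : G.utility p (Function.update (fun _ _ => 0) b sb') b = ⊥ := by
        simp only [ChargingGame.utility]
        rw [if_neg hadm]
      rw [hu1] at hlt
      exact not_lt_bot hlt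
  · intro s hs
    obtain ⟨hvalid, hnash⟩ := hs
    funext b t
    show s b t = 0
    have hupd0 : G.Admissible (Function.update s b (fun _ => 0)) b :=
      admissible_of_zero G _ b (fun t => by rw [Function.update_self])
    have hu0 : G.utility p (Function.update s b fun _ => 0) b = ((0 : ℝ) : EReal) := by
      simp only [ChargingGame.utility]
      rw [if_pos hupd0, Function.update_self]
      norm_num
    have hnb := hnash b (fun _ => 0) (zero_valid G b)
    have hadm : G.Admissible s b := by
      by_contra h
      apply hnb
      have hbot : G.utility p s b = ⊥ := by
        simp only [ChargingGame.utility]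
        rw [if_neg h]
      rw [hbot, hu0]
      exact EReal.bot_lt_coe 0
    obtain ⟨f, hfmax⟩ := exists_maxFlow G (G.cap s) (cap_nonneg G s)
    have hsat' : ∀ t : Fin G.T,
        f (G.gridNode t (G.loc b)) (G.batNode t b) = max 0 (s b t) ∧
        f (G.batNode t b) (G.gridNode t (G.loc b)) = max 0 (-(s b t)) := by
      intro t
      obtain ⟨h1, h2⟩ := hadm f hfmax t
      constructor
      · rw [h1]; simp [ChargingGame.cap]
      · rw [h2]; simp [ChargingGame.cap]
    obtain ⟨h0, h1⟩ := key G hT s b f hfmax.1 hsat'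
    have hus : G.utility p s b = ((-(∑ t, s b t * p t) : ℝ) : EReal) := by
      simp only [ChargingGame.utility]
      rw [if_pos hadm]
    have hzero : s b ⟨0, by omega⟩ = 0 := by
      by_contra hne
      apply hnb
      rw [hus, hu0, EReal.coe_lt_coe_iff, sum_fin_two G hT, h1]
      have hpos : 0 < s b ⟨0, by omega⟩ := lt_of_le_of_ne h0 (Ne.symm hne)
      nlinarith [mul_pos hpos (sub_pos.mpr hp)]
    rcases fin_two G hT t with h | h
    · rw [h, hzero]
    · rw [h, h1, hzero, neg_zero]
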